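/- Let 1 ≤ p₁ ≤ p₂ < ∞ and let φ₁, φ₂ be positive functions on the odd naturals. Suppose there exists C > 0 such that φ₂(2N+1) ≤ C φ₁(2N+1) for every N ∈ ℕ. Then for every sequence x, ‖x‖_{ℓ^{p₁}_{φ₁}} ≤ C ‖x‖_{ℓ^{p₂}_{φ₂}}; in particular ℓ^{p₂}_{φ₂} ⊆ ℓ^{p₁}_{φ₁}. -/

import Mathlib

open scoped ENNReal NNReal BigOperators

/-- The discrete "ball" `S_{m,N} = {m-N, …, m+N}` as a finite set of integers. -/
noncomputable def S (m : ℤ) (N : ℕ) : Finset ℤ := Finset.Icc (m - N) (m + N)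

/-- The generalized discrete Morrey norm `‖x‖_{ℓ^p_φ}`. -/
noncomputable def gMorreyNorm (p : ℝ) (φ : ℕ → ℝ) (x : ℤ → ℂ) : ℝ≥0∞ :=
  ⨆ (m : ℤ) (N : ℕ),
    (ENNReal.ofReal (φ (2 * N + 1)))⁻¹ *
      ((2 * (N : ℝ≥0∞) + 1)⁻¹ * ∑ k ∈ S m N, (‖x k‖₊ : ℝ≥0∞) ^ p) ^ (1 / p)

/-! The `ℓ^p` averages over a ball increase with `p` (Jensen for `t ↦ t ^ (q / p)`), and the
weights compare through `φ₂ ≤ C φ₁`; taking suprema over all balls gives the embedding. -/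

theorem ENNReal.rpow_weighted_mean_rpow_le_of_le {ι : Type*} (s : Finset ι) (w z : ι → ℝ≥0∞)
    (hw : ∑ i ∈ s, w i = 1) {p q : ℝ} (hp : 0 < p) (hpq : p ≤ q) :
    (∑ i ∈ s, w i * z i ^ p) ^ (1 / p) ≤ (∑ i ∈ s, w i * z i ^ q) ^ (1 / q) := by
  have hq : 0 < q := hp.trans_le hpq
  have jensen := ENNReal.rpow_arith_mean_le_arith_mean_rpow s w (fun i => z i ^ p) hw
    ((one_le_div hp).2 hpq)
  simp only [← ENNReal.rpow_mul, mul_div_cancel₀ q hp.ne'] at jensen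
  calc (∑ i ∈ s, w i * z i ^ p) ^ (1 / p)
      = ((∑ i ∈ s, w i * z i ^ p) ^ (q / p)) ^ (1 / q) := by
        rw [← ENNReal.rpow_mul]
        field_simp
    _ ≤ (∑ i ∈ s, w i * z i ^ q) ^ (1 / q) := ENNReal.rpow_le_rpow jensen (by positivity)

theorem ENNReal.inv_ofReal_le_ofReal_mul_inv_ofReal {a b C : ℝ} (hC : 0 < C) (h : b ≤ C * a) :
    (ENNReal.ofReal a)⁻¹ ≤ ENNReal.ofReal C * (ENNReal.ofReal b)⁻¹ := by
  rcases le_or_gt b 0 with hb | hb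
  · simp [ENNReal.ofReal_eq_zero.2 hb, ENNReal.mul_top (ENNReal.ofReal_pos.2 hC).ne']
  · have ha : 0 < a := pos_of_mul_pos_right (hb.trans_le h) hC.le
    rw [← ENNReal.ofReal_inv_of_pos ha, ← ENNReal.ofReal_inv_of_pos hb,
      ← ENNReal.ofReal_mul hC.le]
    refine ENNReal.ofReal_le_ofReal ?_
    rw [← div_eq_mul_inv, le_div_iff₀ hb, inv_mul_le_iff₀ ha]
    linarith

theorem card_S (m : ℤ) (N : ℕ) : (S m N).card = 2 * N + 1 := by
  rw [S, Int.card_Icc]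
  omega

theorem sum_S_inv_card (m : ℤ) (N : ℕ) : ∑ _k ∈ S m N, (2 * (N : ℝ≥0∞) + 1)⁻¹ = 1 := by
  rw [Finset.sum_const, card_S, nsmul_eq_mul]
  push_cast
  exact ENNReal.mul_inv_cancel (by positivity) (by finiteness)

theorem rpow_average_S_le_of_le (z : ℤ → ℝ≥0∞) (m : ℤ) (N : ℕ) {p q : ℝ} (hp : 0 < p)
    (hpq : p ≤ q) :
    ((2 * (N : ℝ≥0∞) + 1)⁻¹ * ∑ k ∈ S m N, z k ^ p) ^ (1 / p)
      ≤ ((2 * (N : ℝ≥0∞) + 1)⁻¹ * ∑ k ∈ S m N, z k ^ q) ^ (1 / q) := by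
  simpa only [Finset.mul_sum] using
    ENNReal.rpow_weighted_mean_rpow_le_of_le (S m N) _ z (sum_S_inv_card m N) hp hpq

theorem stmt12_general (p₁ p₂ : ℝ) (hp₁ : 1 ≤ p₁) (hp : p₁ ≤ p₂)
    (φ₁ φ₂ : ℕ → ℝ)
    (C : ℝ) (hC : 0 < C) (h : ∀ N : ℕ, φ₂ (2 * N + 1) ≤ C * φ₁ (2 * N + 1)) :
    ∀ x : ℤ → ℂ, gMorreyNorm p₁ φ₁ x ≤ ENNReal.ofReal C * gMorreyNorm p₂ φ₂ x := by
  intro x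
  refine iSup₂_le fun m N => ?_
  calc (ENNReal.ofReal (φ₁ (2 * N + 1)))⁻¹ *
        ((2 * (N : ℝ≥0∞) + 1)⁻¹ * ∑ k ∈ S m N, (‖x k‖₊ : ℝ≥0∞) ^ p₁) ^ (1 / p₁)
      ≤ ENNReal.ofReal C * (ENNReal.ofReal (φ₂ (2 * N + 1)))⁻¹ *
        ((2 * (N : ℝ≥0∞) + 1)⁻¹ * ∑ k ∈ S m N, (‖x k‖₊ : ℝ≥0∞) ^ p₂) ^ (1 / p₂) :=
        mul_le_mul' (ENNReal.inv_ofReal_le_ofReal_mul_inv_ofReal hC (h N))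
          (rpow_average_S_le_of_le _ m N (zero_lt_one.trans_le hp₁) hp)
    _ ≤ ENNReal.ofReal C * gMorreyNorm p₂ φ₂ x := by
        rw [mul_assoc]
        gcongr
        exact le_iSup₂_of_le (f := fun m N => _) m N le_rfl

theorem stmt12 (p₁ p₂ : ℝ) (hp₁ : 1 ≤ p₁) (hp : p₁ ≤ p₂)
    (φ₁ φ₂ : ℕ → ℝ)
    (hφ₁ : ∀ N : ℕ, 0 < φ₁ (2 * N + 1)) (hφ₂ : ∀ N : ℕ, 0 < φ₂ (2 * N + 1))
    (C : ℝ) (hC : 0 < C) (h : ∀ N : ℕ, φ₂ (2 * N + 1) ≤ C * φ₁ (2 * N + 1)) :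
    ∀ x : ℤ → ℂ, gMorreyNorm p₁ φ₁ x ≤ ENNReal.ofReal C * gMorreyNorm p₂ φ₂ x :=
  stmt12_general p₁ p₂ hp₁ hp φ₁ φ₂ C hC h
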